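/- For every c ∈ (0, 1/3], the integral ∫₀^c sqrt(log(1/ε)) dε is at most (1 + 1/(2 log 3)) · c · sqrt(log(1/c)). -/

import Mathlib

/-!
The concave function `√` lies below its tangent line at `L = log (1/c)`, so
`√(log (1/ε)) ≤ (log (1/ε) + L) / (2√L)`. The right-hand side integrates exactly, since
`∫₀^c log (1/ε) dε = c (L + 1)`, giving `c √L + c / (2√L)`; finally `L ≥ log 3` turns the
second term into at most `c √L / (2 log 3)`.
-/

open MeasureTheory Set Real

lemma sqrt_le_div_two_sqrt {x L : ℝ} (hx : 0 ≤ x) (hL : 0 < L) :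
    √x ≤ (x + L) / (2 * √L) := by
  rw [le_div_iff₀ (by positivity)]
  have h := two_mul_le_add_sq (√x) (√L)
  rw [sq_sqrt hx, sq_sqrt hL.le] at h
  linarith

lemma log_one_div_eq_neg_log : (fun ε : ℝ => log (1 / ε)) = fun ε => -log ε := by
  funext ε
  rw [one_div, log_inv]

lemma integrableOn_log_one_div_Ioc (c : ℝ) :
    IntegrableOn (fun ε : ℝ => log (1 / ε)) (Ioc 0 c) := by
  rw [log_one_div_eq_neg_log]
  exact intervalIntegral.intervalIntegrable_log'.neg.def'.mono_set Ioc_subset_uIoc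

lemma integral_log_one_div_Ioc {c : ℝ} (hc : 0 ≤ c) :
    ∫ ε in Ioc 0 c, log (1 / ε) = c * (log (1 / c) + 1) := by
  rw [log_one_div_eq_neg_log, ← intervalIntegral.integral_of_le hc,
    intervalIntegral.integral_neg, integral_log, one_div, log_inv]
  ring

lemma integral_sqrt_log_one_div_le {c : ℝ} (hc0 : 0 < c) (hc1 : c < 1) :
    ∫ ε in Ioc 0 c, √(log (1 / ε)) ≤ c * √(log (1 / c)) + c / (2 * √(log (1 / c))) := by
  set L := log (1 / c)
  have hL : 0 < L := log_pos ((one_lt_div hc0).2 hc1)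
  have hsL : 0 < √L := sqrt_pos.2 hL
  have hint : IntegrableOn (fun ε => (log (1 / ε) + L) / (2 * √L)) (Ioc 0 c) :=
    ((integrableOn_log_one_div_Ioc c).add (integrableOn_const measure_Ioc_lt_top.ne)).div_const _
  calc ∫ ε in Ioc 0 c, √(log (1 / ε))
      ≤ ∫ ε in Ioc 0 c, (log (1 / ε) + L) / (2 * √L) := by
        refine integral_mono_of_nonneg (.of_forall fun _ => sqrt_nonneg _) hint ?_
        filter_upwards [ae_restrict_mem measurableSet_Ioc] with ε hε
        refine sqrt_le_div_two_sqrt (log_nonneg ?_) hL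
        rw [le_div_iff₀ hε.1]
        linarith [hε.2]
    _ = (c * (L + 1) + c * L) / (2 * √L) := by
        rw [integral_div, integral_add (integrableOn_log_one_div_Ioc c)
          (integrableOn_const measure_Ioc_lt_top.ne), integral_log_one_div_Ioc hc0.le,
          setIntegral_const, measureReal_def, volume_Ioc, sub_zero,
          ENNReal.toReal_ofReal hc0.le, smul_eq_mul]
    _ = c * √L + c / (2 * √L) := by
        field_simp
        rw [sq_sqrt hL.le]
        ring

/-- For c ∈ (0,1/3], ∫₀^c √(log(1/ε)) dε ≤ (1 + 1/(2 log 3)) c √(log(1/c)). -/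
theorem stmt1 (c : ℝ) (hc : c ∈ Set.Ioc (0:ℝ) (1/3)) :
    (∫ ε in Set.Ioc (0:ℝ) c, Real.sqrt (Real.log (1/ε))) ≤
      (1 + 1/(2 * Real.log 3)) * c * Real.sqrt (Real.log (1/c)) := by
  obtain ⟨hc0, hc3⟩ := hc
  set L := log (1 / c)
  have hlog3 : 0 < log 3 := log_pos (by norm_num)
  have hL3 : log 3 ≤ L := log_le_log (by norm_num) (by rw [le_div_iff₀ hc0]; linarith)
  have hsL : 0 < √L := sqrt_pos.2 (hlog3.trans_le hL3)
  have hcorr : c / (2 * √L) ≤ 1 / (2 * log 3) * c * √L := by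
    rw [div_le_iff₀ (by positivity)]
    calc c = 1 / (2 * log 3) * c * (2 * log 3) := by field_simp
      _ ≤ 1 / (2 * log 3) * c * (2 * L) := by gcongr
      _ = 1 / (2 * log 3) * c * √L * (2 * √L) := by
        rw [mul_assoc _ √L, mul_left_comm √L, mul_self_sqrt (hlog3.le.trans hL3)]
  calc ∫ ε in Ioc 0 c, √(log (1 / ε))
      ≤ c * √L + c / (2 * √L) := integral_sqrt_log_one_div_le hc0 (by linarith)
    _ ≤ (1 + 1 / (2 * log 3)) * c * √L := by linarith
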